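/- arXiv:1504.04201 — 2 statements merged into one kernel-verified Lean document; each statement's English description precedes it below -/
import Mathlib

section
/- For all integers k ≥ 2 and t ≥ 0, α_{2k+t, k−1} = k: the least total degree of a monomial in the (k−1)-st symbolic power of I_{B_{2k+t}} equals k. -/
open MvPolynomial
open Fin.NatCast

/-- The subtree (arc) of `n-2` consecutive cycle vertices of the `n`-cycle `Q_n`
(on vertices `1,…,n` inside `Fin (n+2)`), starting at vertex `i+1`, for `i = 0,…,n-1`.
The family `arcT n i`, `i < n`, is exactly the family `𝒯` of subtrees of `Q_n`
with `n-2` vertices. -/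
def arcT (n i : ℕ) : Finset (Fin (n + 2)) :=
  (Finset.range (n - 2)).image fun t => (((i + t) % n + 1 : ℕ) : Fin (n + 2))

/-- The monomial prime ideal `⟨x_v⟩ + ⟨x_j : j ∈ S⟩`. -/
noncomputable def apexIdeal (K : Type*) [Field K] (n : ℕ) (v : Fin (n + 2))
    (S : Finset (Fin (n + 2))) : Ideal (MvPolynomial (Fin (n + 2)) K) :=
  Ideal.span (insert (X v) (X '' (S : Set (Fin (n+2))) : Set (MvPolynomial (Fin (n + 2)) K)))

/-- The `m`-th symbolic power `I_{B_n}^{(m)} = ⋂_{S ∈ 𝒯} (I_{[0,S]}^m ∩ I_{[n+1,S]}^m)`. -/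
noncomputable def symbPow (K : Type*) [Field K] (n m : ℕ) : Ideal (MvPolynomial (Fin (n + 2)) K) :=
  ⨅ i ∈ Finset.range n,
    apexIdeal K n 0 (arcT n i) ^ m ⊓ apexIdeal K n ((n + 1 : ℕ) : Fin (n + 2)) (arcT n i) ^ m

/-- The monomial `x_0^{a_0} x_1^{a_1} ⋯ x_{n+1}^{a_{n+1}}`. -/
noncomputable def monom (K : Type*) [Field K] (n : ℕ) (a : Fin (n + 2) → ℕ) :
    MvPolynomial (Fin (n + 2)) K :=
  ∏ i, X i ^ a i

/-- `α_{n,m}`: the least total degree of a monomial lying in `I_{B_n}^{(m)}`. -/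
noncomputable def alphaSymb (K : Type*) [Field K] (n m : ℕ) : ℕ :=
  sInf {d | ∃ a : Fin (n + 2) → ℕ, (∑ i, a i) = d ∧ monom K n a ∈ symbPow K n m}

/-- The Stanley–Reisner ideal `I_{B_n}` of the bipyramid `B_n`, presented by its
quadratic generators: `x_0 x_{n+1}` together with `x_i x_j` for non-adjacent
vertices `i, j` of the cycle `Q_n`. -/
noncomputable def bipyrIdeal (K : Type*) [Field K] (n : ℕ) : Ideal (MvPolynomial (Fin (n + 2)) K) :=
  Ideal.span ({X (0 : Fin (n + 2)) * X ((n + 1 : ℕ) : Fin (n + 2))} ∪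
    {p | ∃ i j : ℕ, 1 ≤ i ∧ i ≤ n ∧ 1 ≤ j ∧ j ≤ n ∧ i ≠ j ∧
      j ≠ i % n + 1 ∧ i ≠ j % n + 1 ∧
      p = X ((i : ℕ) : Fin (n + 2)) * X ((j : ℕ) : Fin (n + 2))})

/-!
A monomial `x^a` lies in `I_{B_n}^{(m)}` iff each of the sets `{apex} ∪ S_i` carries `a`-weight
at least `m`. If the total degree were at most `m`, each of these sets would carry all of the
weight; but every vertex is avoided by one of them, so `a = 0`, which is absurd for `m ≥ 1`.
Hence `α_{n,m} ≥ m + 1`. Conversely `x_1 x_3 ⋯ x_{2k-1}` has degree `k` and lies in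
`I_{B_n}^{(k-1)}` as soon as `n ≥ 2k`: an arc misses two adjacent cycle vertices, and at most one
of them is odd and below `2k`.
-/

namespace MvPolynomial

variable {σ R : Type*} [CommSemiring R] [Fintype σ]

theorem prod_X_pow_mem_pow_span_X_image_iff [Nontrivial R] (a : σ → ℕ) (V : Finset σ)
    (m : ℕ) :
    (∏ i, X i ^ a i : MvPolynomial σ R) ∈ Ideal.span (X '' (V : Set σ)) ^ m ↔
      m ≤ ∑ i ∈ V, a i := by
  classical
  constructor
  · intro h
    let φ : MvPolynomial σ R →ₐ[R] Polynomial R := aeval fun i => if i ∈ V then .X else 1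
    have hφ : φ (∏ i, X i ^ a i) = .X ^ ∑ i ∈ V, a i := by
      simp [φ, ← Finset.prod_pow_eq_pow_sum, Finset.prod_ite_mem]
    have hle : Ideal.map φ (Ideal.span (X '' (V : Set σ))) ≤ Ideal.span {Polynomial.X} := by
      rw [Ideal.map_span, Ideal.span_le]
      rintro _ ⟨_, ⟨i, hi, rfl⟩, rfl⟩
      simp [φ, Finset.mem_coe.mp hi]
    have := Ideal.pow_right_mono hle m (Ideal.map_pow φ _ m ▸ Ideal.mem_map_of_mem φ h)
    rw [hφ, Ideal.span_singleton_pow, Ideal.mem_span_singleton, Polynomial.X_pow_dvd_iff] at this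
    by_contra! hlt
    simpa [Polynomial.coeff_X_pow] using this _ hlt
  · intro h
    have hV : (∏ i ∈ V, X i ^ a i : MvPolynomial σ R) ∈
        Ideal.span (X '' (V : Set σ)) ^ ∑ i ∈ V, a i := by
      rw [← Finset.prod_pow_eq_pow_sum]
      exact Ideal.prod_mem_prod fun i hi =>
        Ideal.pow_mem_pow (Ideal.subset_span (Set.mem_image_of_mem X (Finset.mem_coe.mpr hi))) _
    rw [← Finset.prod_mul_prod_compl V]
    exact Ideal.pow_le_pow_right h (Ideal.mul_mem_right _ _ hV)

end MvPolynomial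

lemma Finset.eq_zero_of_sum_univ_le_sum {ι : Type*} [Fintype ι] {a : ι → ℕ} {s : Finset ι}
    (h : ∑ i, a i ≤ ∑ i ∈ s, a i) {j : ι} (hj : j ∉ s) : a j = 0 := by
  classical
  rw [← Finset.sum_add_sum_compl s] at h
  exact Finset.sum_eq_zero_iff.mp (by omega) j (Finset.mem_compl.mpr hj)

theorem Fin.natCast_inj_of_lt {N a b : ℕ} [NeZero N] (ha : a < N) (hb : b < N) :
    (a : Fin N) = b ↔ a = b := by
  simp [Fin.ext_iff, Fin.val_natCast, Nat.mod_eq_of_lt ha, Nat.mod_eq_of_lt hb]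

-- The arc starting after label `i` runs through `i + 1, …, n` and wraps around to `1, …, i - 2`.
lemma natCast_mem_arcT_iff {n i v : ℕ} (hi : i < n) (hv : v < n + 2) :
    (v : Fin (n + 2)) ∈ arcT n i ↔
      v ≤ n ∧ (i < v ∧ v ≤ i + n - 2 ∨ 1 ≤ v ∧ v + 2 ≤ i) := by
  have hlt : ∀ t, (i + t) % n + 1 < n + 2 := fun t => by
    have := Nat.mod_lt (i + t) (by omega : 0 < n); omega
  have hwrap : ∀ t < n, (i + t) % n = if n ≤ i + t then i + t - n else i + t := fun t ht => by
    rw [Nat.add_mod_eq_ite, Nat.mod_eq_of_lt hi, Nat.mod_eq_of_lt ht]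
  simp only [arcT, Finset.mem_image, Finset.mem_range]
  constructor
  · rintro ⟨t, ht, hvt⟩
    rw [Fin.natCast_inj_of_lt (hlt t) hv, hwrap _ (by omega)] at hvt
    split_ifs at hvt <;> omega
  · intro h
    obtain ⟨t, ht, hvt⟩ : ∃ t < n - 2, (i + t) % n + 1 = v := by
      rcases h with ⟨hvn, h | h⟩
      · refine ⟨v - 1 - i, by omega, ?_⟩
        rw [hwrap _ (by omega)]; split_ifs <;> omega
      · refine ⟨v - 1 + n - i, by omega, ?_⟩
        rw [hwrap _ (by omega)]; split_ifs <;> omega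
    exact ⟨t, ht, by rw [hvt]⟩

lemma zero_notMem_arcT {n i : ℕ} (hi : i < n) : (0 : Fin (n + 2)) ∉ arcT n i := by
  simpa using (natCast_mem_arcT_iff (v := 0) hi (by omega)).not.mpr (by omega)

lemma last_notMem_arcT {n i : ℕ} (hi : i < n) : ((n + 1 : ℕ) : Fin (n + 2)) ∉ arcT n i :=
  (natCast_mem_arcT_iff hi (by omega)).not.mpr (by omega)

lemma natCast_notMem_arcT_mod {n v : ℕ} (hn : 0 < n) (hv : v < n + 2) :
    (v : Fin (n + 2)) ∉ arcT n (v % n) := by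
  rw [natCast_mem_arcT_iff (Nat.mod_lt v hn) hv]
  rcases lt_trichotomy v n with hlt | rfl | hgt
  · rw [Nat.mod_eq_of_lt hlt]; omega
  · rw [Nat.mod_self]; omega
  · omega

def oddVertices (n k : ℕ) : Finset (Fin (n + 2)) :=
  (Finset.range k).image fun j => ((2 * j + 1 : ℕ) : Fin (n + 2))

lemma card_oddVertices {n k : ℕ} (h : 2 * k ≤ n) : (oddVertices n k).card = k := by
  rw [oddVertices, Finset.card_image_of_injOn, Finset.card_range]
  intro j hj j' hj' hjj'
  simp only [Finset.coe_range, Set.mem_Iio] at hj hj'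
  have := (Fin.natCast_inj_of_lt (by omega) (by omega)).mp hjj'
  omega

lemma card_oddVertices_sdiff_arcT_le_one {n k i : ℕ} (h : 2 * k ≤ n) (hi : i < n) :
    (oddVertices n k \ arcT n i).card ≤ 1 := by
  refine Finset.card_le_one.mpr ?_
  simp only [oddVertices, Finset.mem_sdiff, Finset.mem_image, Finset.mem_range]
  rintro _ ⟨⟨j, hj, rfl⟩, hjarc⟩ _ ⟨⟨j', hj', rfl⟩, hj'arc⟩
  rw [natCast_mem_arcT_iff hi (by omega)] at hjarc hj'arc
  congr 2
  omega

section SymbolicPower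

variable {K : Type*} [Field K]

lemma monom_mem_apexIdeal_pow_iff {n m : ℕ} {v : Fin (n + 2)} {S : Finset (Fin (n + 2))}
    (hv : v ∉ S) (a : Fin (n + 2) → ℕ) :
    monom K n a ∈ apexIdeal K n v S ^ m ↔ m ≤ a v + ∑ j ∈ S, a j := by
  rw [apexIdeal, ← Set.image_insert_eq, ← Finset.coe_insert, monom,
    prod_X_pow_mem_pow_span_X_image_iff, Finset.sum_insert hv]

lemma monom_mem_symbPow_iff {n m : ℕ} (a : Fin (n + 2) → ℕ) :
    monom K n a ∈ symbPow K n m ↔ ∀ i < n, m ≤ a 0 + ∑ j ∈ arcT n i, a j ∧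
      m ≤ a ((n + 1 : ℕ) : Fin (n + 2)) + ∑ j ∈ arcT n i, a j := by
  simp only [symbPow, Submodule.mem_iInf, Submodule.mem_inf, Finset.mem_range]
  refine forall₂_congr fun i hi => ?_
  rw [monom_mem_apexIdeal_pow_iff (zero_notMem_arcT hi),
    monom_mem_apexIdeal_pow_iff (last_notMem_arcT hi)]

theorem lt_sum_of_monom_mem_symbPow {n m : ℕ} (hn : 0 < n) (hm : 1 ≤ m)
    {a : Fin (n + 2) → ℕ} (h : monom K n a ∈ symbPow K n m) : m < ∑ j, a j := by
  rw [monom_mem_symbPow_iff] at h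
  by_contra! hsum
  have hzero : ∀ v, a v = 0 := by
    intro v
    have hi : v.val % n < n := Nat.mod_lt _ hn
    have hv : v ∉ arcT n (v.val % n) := by simpa using natCast_notMem_arcT_mod hn v.isLt
    obtain ⟨h0, hlast⟩ := h _ hi
    by_cases hv0 : v = 0
    · refine Finset.eq_zero_of_sum_univ_le_sum 
        (s := insert ((n + 1 : ℕ) : Fin (n + 2)) (arcT n _)) ?_
        (Finset.mem_insert.not.mpr (not_or.mpr ⟨?_, hv⟩))
      · rw [Finset.sum_insert (last_notMem_arcT hi)]; omega
      · rw [hv0, Fin.natCast_eq_last]; exact Fin.last_pos.ne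
    · refine Finset.eq_zero_of_sum_univ_le_sum (s := insert 0 (arcT n _)) ?_
        (Finset.mem_insert.not.mpr (not_or.mpr ⟨hv0, hv⟩))
      rw [Finset.sum_insert (zero_notMem_arcT hi)]; omega
  have := (h 0 hn).1
  simp only [hzero, Finset.sum_const_zero, add_zero] at this
  omega

lemma monom_oddVertices_mem_symbPow {n k : ℕ} (h : 2 * k ≤ n) :
    monom K n (fun v => if v ∈ oddVertices n k then 1 else 0) ∈ symbPow K n (k - 1) := by
  rw [monom_mem_symbPow_iff]
  intro i hi
  have hmissed := card_oddVertices_sdiff_arcT_le_one h hi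
  have hsplit := Finset.card_sdiff_add_card_inter (oddVertices n k) (arcT n i)
  have harc : ∑ j ∈ arcT n i, (if j ∈ oddVertices n k then 1 else 0) =
      (oddVertices n k ∩ arcT n i).card := by
    rw [Finset.sum_boole, Finset.filter_mem_eq_inter, Nat.cast_id, Finset.inter_comm]
  rw [card_oddVertices h] at hsplit
  omega

lemma alphaSymb_eq {n m d : ℕ}
    (hmem : ∃ a : Fin (n + 2) → ℕ, ∑ j, a j = d ∧ monom K n a ∈ symbPow K n m)
    (hmin : ∀ a : Fin (n + 2) → ℕ, monom K n a ∈ symbPow K n m → d ≤ ∑ j, a j) :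
    alphaSymb K n m = d := by
  refine le_antisymm (Nat.sInf_le hmem) (le_csInf ⟨d, hmem⟩ ?_)
  rintro _ ⟨a, rfl, ha⟩
  exact hmin a ha

end SymbolicPower

/-- For all `k ≥ 2` and `t ≥ 0`: `α_{2k+t, k-1} = k`. -/
theorem alpha_stationary (K : Type*) [Field K] (k t : ℕ) (hk : 2 ≤ k) :
    alphaSymb K (2 * k + t) (k - 1) = k := by
  refine alphaSymb_eq ⟨_, ?_, monom_oddVertices_mem_symbPow (by omega)⟩ fun a ha => ?_
  · simp [card_oddVertices (show 2 * k ≤ 2 * k + t by omega)]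
  · have := lt_sum_of_monom_mem_symbPow (by omega) (by omega) ha
    omega
end

section
/- Let k ≥ 2 and n = 2k. The monomials f_1 = x_1 x_3 ⋯ x_{2k−1} and f_2 = x_2 x_4 ⋯ x_{2k} (products of the variables at the odd-indexed, respectively even-indexed, vertices of the cycle Q_{2k}) both belong to I_{B_{2k}}^{(k−1)}; moreover w_S(f_1) = w_S(f_2) = k−1 for every S ∈ 𝒯 (where for a monomial whose x_0- and x_{n+1}-exponents are 0, w_S denotes the common weight Σ_{i∈S} a_i). -/
open MvPolynomial
open Fin.NatCast

/-!
An arc of `2k - 2` consecutive vertices of the even cycle `Q_{2k}` contains exactly `k - 1` odd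
and `k - 1` even vertices, so `f₁` and `f₂` have weight `k - 1` on every `S ∈ 𝒯`. A monomial of
weight at least `m` on `S` lies in `⟨x_j : j ∈ S⟩ ^ m`, hence in `I_{[0,S]}^m ∩ I_{[n+1,S]}^m`.
-/

theorem Ideal.prod_pow_mem_pow_sum {R ι : Type*} [CommSemiring R] {I : Ideal R} {s : Finset ι}
    {f : ι → R} (a : ι → ℕ) (hf : ∀ j ∈ s, f j ∈ I) :
    (∏ j ∈ s, f j ^ a j) ∈ I ^ (∑ j ∈ s, a j) := by
  rw [← Finset.prod_pow_eq_pow_sum]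
  exact Ideal.prod_mem_prod fun j hj => Ideal.pow_mem_pow (hf j hj) _

theorem monom_mem_apexIdeal_pow (K : Type*) [Field K] {n m : ℕ} (v : Fin (n + 2))
    (S : Finset (Fin (n + 2))) {a : Fin (n + 2) → ℕ} (h : m ≤ ∑ j ∈ S, a j) :
    monom K n a ∈ apexIdeal K n v S ^ m := by
  refine Ideal.pow_le_pow_right h ?_
  rw [monom, ← Finset.prod_mul_prod_compl S]
  refine Ideal.mul_mem_right _ _ (Ideal.prod_pow_mem_pow_sum a fun j hj => ?_)
  exact Ideal.subset_span (Set.mem_insert_of_mem _ ⟨j, hj, rfl⟩)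

theorem monom_mem_symbPow_of_le_sum_arcT (K : Type*) [Field K] {n m : ℕ}
    {a : Fin (n + 2) → ℕ} (h : ∀ i < n, m ≤ ∑ j ∈ arcT n i, a j) :
    monom K n a ∈ symbPow K n m := by
  simp only [symbPow, Submodule.mem_iInf, Submodule.mem_inf, Finset.mem_range]
  exact fun i hi => ⟨monom_mem_apexIdeal_pow K _ _ (h i hi), monom_mem_apexIdeal_pow K _ _ (h i hi)⟩

theorem val_mem_Icc_of_mem_arcT {n i : ℕ} {j : Fin (n + 2)} (hj : j ∈ arcT n i) :
    1 ≤ (j : ℕ) ∧ (j : ℕ) ≤ n := by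
  obtain ⟨t, ht, rfl⟩ := Finset.mem_image.mp hj
  have hlt : (i + t) % n < n := Nat.mod_lt _ (by grind)
  rw [Fin.val_cast_of_lt (by omega)]
  omega

theorem sum_arcT {M : Type*} [AddCommMonoid M] (n i : ℕ) (b : ℕ → M) :
    ∑ j ∈ arcT n i, b j = ∑ t ∈ Finset.range (n - 2), b ((i + t) % n + 1) := by
  have hval : ∀ t ∈ Finset.range (n - 2),
      ((((i + t) % n + 1 : ℕ) : Fin (n + 2)) : ℕ) = (i + t) % n + 1 := fun t ht => by
    have := Nat.mod_lt (i + t) (show 0 < n by grind)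
    exact Fin.val_cast_of_lt (by omega)
  rw [arcT, Finset.sum_image]
  · exact Finset.sum_congr rfl fun t ht => by rw [hval t ht]
  · intro s hs t ht hst
    have hmod := congrArg Fin.val hst
    rw [hval s hs, hval t ht] at hmod
    have hs' : s < n := by grind
    have ht' : t < n := by grind
    have hst' := Nat.ModEq.add_left_cancel' i (Nat.add_right_cancel hmod)
    rwa [Nat.ModEq, Nat.mod_eq_of_lt hs', Nat.mod_eq_of_lt ht'] at hst'

theorem sum_range_ite_mod_two (i m : ℕ) {r : ℕ} (hr : r < 2) :
    ∑ t ∈ Finset.range (2 * m), (if (i + t) % 2 = r then 1 else 0) = m := by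
  induction m with
  | zero => simp
  | succ m ih =>
    rw [show 2 * (m + 1) = 2 * m + 1 + 1 by ring, Finset.sum_range_succ, Finset.sum_range_succ, ih]
    split_ifs <;> omega

theorem sum_arcT_ite_mod_two (k i : ℕ) {r : ℕ} (hr : r < 2) :
    ∑ j ∈ arcT (2 * k) i, (if (j : ℕ) % 2 = r then 1 else 0) = k - 1 := by
  rw [sum_arcT (2 * k) i fun j => if j % 2 = r then 1 else 0, show 2 * k - 2 = 2 * (k - 1) by omega]
  refine (Finset.sum_congr rfl fun t _ => ?_).trans (sum_range_ite_mod_two (i + 1) (k - 1) hr)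
  have := Nat.mod_mod_of_dvd (i + t) (dvd_mul_right 2 k)
  exact if_congr (by omega) rfl rfl

theorem even_case_minimal_generators_general (K : Type*) [Field K] (k : ℕ) :
    (monom K (2 * k) (fun j => if (j : ℕ) % 2 = 1 ∧ (j : ℕ) ≤ 2 * k then 1 else 0)
        ∈ symbPow K (2 * k) (k - 1)) ∧
    (monom K (2 * k) (fun j => if (j : ℕ) % 2 = 0 ∧ 1 ≤ (j : ℕ) ∧ (j : ℕ) ≤ 2 * k then 1 else 0)
        ∈ symbPow K (2 * k) (k - 1)) ∧
    ∀ i < 2 * k,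
      (∑ j ∈ arcT (2 * k) i,
          (if (j : ℕ) % 2 = 1 ∧ (j : ℕ) ≤ 2 * k then 1 else 0)) = k - 1 ∧
      (∑ j ∈ arcT (2 * k) i,
          (if (j : ℕ) % 2 = 0 ∧ 1 ≤ (j : ℕ) ∧ (j : ℕ) ≤ 2 * k then 1 else 0)) = k - 1 := by
  have hweight : ∀ i,
      (∑ j ∈ arcT (2 * k) i,
          (if (j : ℕ) % 2 = 1 ∧ (j : ℕ) ≤ 2 * k then 1 else 0)) = k - 1 ∧
      (∑ j ∈ arcT (2 * k) i,
          (if (j : ℕ) % 2 = 0 ∧ 1 ≤ (j : ℕ) ∧ (j : ℕ) ≤ 2 * k then 1 else 0)) = k - 1 := by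
    intro i
    constructor
    · refine (Finset.sum_congr rfl fun j hj => ?_).trans (sum_arcT_ite_mod_two k i one_lt_two)
      have := val_mem_Icc_of_mem_arcT hj
      exact if_congr (by omega) rfl rfl
    · refine (Finset.sum_congr rfl fun j hj => ?_).trans (sum_arcT_ite_mod_two k i two_pos)
      have := val_mem_Icc_of_mem_arcT hj
      exact if_congr (by omega) rfl rfl
  exact ⟨monom_mem_symbPow_of_le_sum_arcT K fun i _ => (hweight i).1.ge,
    monom_mem_symbPow_of_le_sum_arcT K fun i _ => (hweight i).2.ge, fun i _ => hweight i⟩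

/-- For `k ≥ 2` and `n = 2k`, the monomials `f₁ = x_1 x_3 ⋯ x_{2k-1}` and
`f₂ = x_2 x_4 ⋯ x_{2k}` lie in `I_{B_{2k}}^{(k-1)}`, and `w_S(f₁) = w_S(f₂) = k - 1`
for every subtree `S ∈ 𝒯`. -/
theorem even_case_minimal_generators (K : Type*) [Field K] (k : ℕ) (hk : 2 ≤ k) :
    (monom K (2 * k) (fun j => if (j : ℕ) % 2 = 1 ∧ (j : ℕ) ≤ 2 * k then 1 else 0)
        ∈ symbPow K (2 * k) (k - 1)) ∧
    (monom K (2 * k) (fun j => if (j : ℕ) % 2 = 0 ∧ 1 ≤ (j : ℕ) ∧ (j : ℕ) ≤ 2 * k then 1 else 0)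
        ∈ symbPow K (2 * k) (k - 1)) ∧
    ∀ i < 2 * k,
      (∑ j ∈ arcT (2 * k) i,
          (if (j : ℕ) % 2 = 1 ∧ (j : ℕ) ≤ 2 * k then 1 else 0)) = k - 1 ∧
      (∑ j ∈ arcT (2 * k) i,
          (if (j : ℕ) % 2 = 0 ∧ 1 ≤ (j : ℕ) ∧ (j : ℕ) ≤ 2 * k then 1 else 0)) = k - 1 :=
  even_case_minimal_generators_general K k
end
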